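/- Fix constants k₀ ≥ 4 and C₀ ≥ 1000 and let E ⊂ ℝ² be finite. There is a universal constant C such that for every Q ∈ Λ^♯ and every point x_Q^♯ ∈ Q with dist(x_Q^♯, E) ≥ c₀δ_Q (c₀ the universal constant of the representative-point lemma), one has σ^♯(x_Q^♯, 4k₀) ⊂ C·ℬ(x_Q^♯, δ_Q). -/

import Mathlib

open Set Real Pointwise

noncomputable section

abbrev E2 := EuclideanSpace ℝ (Fin 2)

/-- Partial derivative in coordinate direction `i`. -/
noncomputable def pd (i : Fin 2) (F : E2 → ℝ) : E2 → ℝ :=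
  fun x => fderiv ℝ F x (EuclideanSpace.single i 1)

/-- Iterated partial derivative `∂^α` for a multi-index `α = (α₁, α₂)`. -/
noncomputable def Dmul (α : ℕ × ℕ) (F : E2 → ℝ) : E2 → ℝ :=
  (pd 0)^[α.1] ((pd 1)^[α.2] F)

/-- The multi-indices `α` with `|α| ≤ 2`. -/
def multiIdx2 : Finset (ℕ × ℕ) :=
  (Finset.range 3 ×ˢ Finset.range 3).filter (fun α => α.1 + α.2 ≤ 2)

/-- `(Σ_{|α| ≤ 2} |∂^α F (x)|²)^{1/2}`. -/
noncomputable def C2sum (F : E2 → ℝ) (x : E2) : ℝ :=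
  Real.sqrt (∑ α ∈ multiIdx2, (Dmul α F x) ^ 2)

/-- `‖F‖_{C²(ℝ²)} ≤ M`. -/
def C2NormLE (F : E2 → ℝ) (M : ℝ) : Prop := ∀ x, C2sum F x ≤ M

/-- `f ∈ C²₊(E)`: `f` is the restriction to `E` of a nonnegative `C²` function of finite norm. -/
def MemC2plusTrace (E : Set E2) (f : E2 → ℝ) : Prop :=
  ∃ F : E2 → ℝ, ContDiff ℝ 2 F ∧ (∀ x, 0 ≤ F x) ∧ (∀ x ∈ E, F x = f x) ∧ ∃ M, C2NormLE F M

/-- The trace norm `‖f‖_{C²₊(E)}`. -/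
noncomputable def traceNormPlus (E : Set E2) (f : E2 → ℝ) : ℝ :=
  sInf { M | ∃ F : E2 → ℝ, ContDiff ℝ 2 F ∧ (∀ x, 0 ≤ F x) ∧ (∀ x ∈ E, F x = f x) ∧
    C2NormLE F M }

/-- The one-jet `𝒥_x F`, as an affine function on `ℝ²`. -/
noncomputable def jet (F : E2 → ℝ) (x : E2) : E2 → ℝ :=
  fun y => F x + fderiv ℝ F x (y - x)

/-- The (half-open) square with center `c` and sidelength `δ`. -/
def sqC (c : E2) (δ : ℝ) : Set E2 :=
  {x | ∀ i : Fin 2, c i - δ / 2 ≤ x i ∧ x i < c i + δ / 2}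

/-- `σ(x, S)`. -/
def sigmaSet (x : E2) (S : Set E2) : Set (E2 → ℝ) :=
  { P | ∃ φ : E2 → ℝ, ContDiff ℝ 2 φ ∧ (∀ z ∈ S, φ z = 0) ∧ C2NormLE φ 1 ∧ P = jet φ x }

/-- `σ^♯(x, k)`. -/
def sigmaSharp (E : Set E2) (x : E2) (k : ℕ) : Set (E2 → ℝ) :=
  { P | ∀ S : Set E2, S ⊆ E → S.ncard ≤ k → P ∈ sigmaSet x S }

/-- `Γ₊(x, S, M)` (for the data `f`). -/
def GammaPlus (f : E2 → ℝ) (x : E2) (S : Set E2) (M : ℝ) : Set (E2 → ℝ) :=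
  { P | ∃ F : E2 → ℝ, ContDiff ℝ 2 F ∧ (∀ y, 0 ≤ F y) ∧ (∀ z ∈ S, F z = f z) ∧
      C2NormLE F M ∧ P = jet F x }

/-- `Γ₊^♯(x, k, M)` (for `f` given on `E`). -/
def GammaSharp (E : Set E2) (f : E2 → ℝ) (x : E2) (k : ℕ) (M : ℝ) : Set (E2 → ℝ) :=
  { P | ∀ S : Set E2, S ⊆ E → S.ncard ≤ k → P ∈ GammaPlus f x S M }

/-- `ℬ(x, δ) = {P : |∂^α P(x)| ≤ δ^{2-|α|} for |α| ≤ 1}`. -/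
def jetBall (x : E2) (δ : ℝ) : Set (E2 → ℝ) :=
  { P | |P x| ≤ δ ^ 2 ∧ ∀ i : Fin 2, |fderiv ℝ P x (EuclideanSpace.single i 1)| ≤ δ }

/-- `|P|_{ℛ_x}`. -/
noncomputable def jetNormAt (x : E2) (P : E2 → ℝ) : ℝ :=
  Real.sqrt ((P x) ^ 2 + ‖fderiv ℝ P x‖ ^ 2)

/-- diameter of a set of jets with respect to `|·|_{ℛ_x}`. -/
noncomputable def jetDiam (x : E2) (A : Set (E2 → ℝ)) : ℝ :=
  sSup { r | ∃ P ∈ A, ∃ P' ∈ A, r = jetNormAt x (P - P') }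

noncomputable def vec2 (a b : ℝ) : E2 := (WithLp.equiv 2 (Fin 2 → ℝ)).symm ![a, b]

/-- A dyadic square is encoded by a triple `q = (i, j, k)`,
corresponding to `[2^k i, 2^k (i+1)) × [2^k j, 2^k (j+1))`; its sidelength is `2^k`. -/
noncomputable def dyadicLen (q : ℤ × ℤ × ℤ) : ℝ := (2 : ℝ) ^ q.2.2

noncomputable def dyadicCenter (q : ℤ × ℤ × ℤ) : E2 :=
  vec2 ((2 : ℝ) ^ q.2.2 * ((q.1 : ℝ) + 1 / 2)) ((2 : ℝ) ^ q.2.2 * ((q.2.1 : ℝ) + 1 / 2))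

noncomputable def dyadicSq (q : ℤ × ℤ × ℤ) : Set E2 := sqC (dyadicCenter q) (dyadicLen q)

/-- The concentric dilate `λQ` of the dyadic square `q`. -/
noncomputable def dilate (q : ℤ × ℤ × ℤ) (lam : ℝ) : Set E2 :=
  sqC (dyadicCenter q) (lam * dyadicLen q)

/-- The dyadic parent `Q⁺`. -/
def dyadicParent (q : ℤ × ℤ × ℤ) : ℤ × ℤ × ℤ := (Int.fdiv q.1 2, Int.fdiv q.2.1 2, q.2.2 + 1)

/-- Membership in the Calderón–Zygmund collection `Λ₀`. -/
def memLambda0 (E : Set E2) (k₀ : ℕ) (C₀ : ℝ) (q : ℤ × ℤ × ℤ) : Prop :=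
  dyadicLen q ≤ 1 ∧
  (∀ x ∈ dilate q 2, C₀ * dyadicLen q ≤ jetDiam x (sigmaSharp E x k₀)) ∧
  (∃ y ∈ dilate (dyadicParent q) 2, jetDiam y (sigmaSharp E y k₀) < 2 * C₀ * dyadicLen q)

def Lambda0 (E : Set E2) (k₀ : ℕ) (C₀ : ℝ) : Set (ℤ × ℤ × ℤ) := { q | memLambda0 E k₀ C₀ q }

def LambdaSharp (E : Set E2) (k₀ : ℕ) (C₀ : ℝ) : Set (ℤ × ℤ × ℤ) :=
  { q | q ∈ Lambda0 E k₀ C₀ ∧ (E ∩ dilate q 2).Nonempty }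

/-!
Let `P ∈ σ^♯(x, 4k₀)`, let `x̂ ∈ 2Q⁺` be the point where `σ^♯(x̂, k₀)` has diameter
`< 2C₀δ_Q`, and let `y ∈ E ∩ 2Q`; both points are within `O(δ_Q)` of `x`.
For every `S ⊆ E` with `#S ≤ k₀`, the jets `R ∈ σ(x̂, S)` with `|∇R - ∇P| ≤ 4|x̂ - x|` form a
convex set in the three-dimensional space of affine jets, and any four of these sets meet:
a `φ` with `𝒥_x φ = P` vanishing on the union of the four `S` (at most `4k₀` points) gives
the common jet `𝒥_x̂ φ`, by the `C²` bound. Helly's theorem yields one `R ∈ σ^♯(x̂, k₀)`, and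
as `0 ∈ σ^♯(x̂, k₀)` too, `|∇R| < 2C₀δ_Q`, so `|∇P| ≲ C₀δ_Q`. Finally a `φ` with `𝒥_x φ = P`
and `φ(y) = 0` gives, by Taylor's formula at `x`, `|P(x)| ≲ |∇P| |y - x| + |y - x|² ≲ C₀δ_Q²`.
-/

theorem eq_single_zero_add_single_one (v : E2) :
    v = v 0 • EuclideanSpace.single 0 1 + v 1 • EuclideanSpace.single 1 1 := by
  ext j
  fin_cases j <;> simp

theorem norm_le_abs_apply_zero_add_abs_apply_one (v : E2) : ‖v‖ ≤ |v 0| + |v 1| := by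
  rw [EuclideanSpace.norm_eq, Fin.sum_univ_two, Real.sqrt_le_left (by positivity)]
  simp only [Real.norm_eq_abs, sq_abs]
  nlinarith [mul_nonneg (abs_nonneg (v 0)) (abs_nonneg (v 1)), sq_abs (v 0), sq_abs (v 1)]

theorem norm_sub_le_of_abs_apply_sub_le {u v : E2} {r : ℝ} (h : ∀ i, |u i - v i| ≤ r) :
    ‖u - v‖ ≤ 2 * r := by
  have := norm_le_abs_apply_zero_add_abs_apply_one (u - v)
  simp only [PiLp.sub_apply] at this
  linarith [h 0, h 1]

theorem ContinuousLinearMap.norm_le_norm_apply_single_add {F : Type*} [NormedAddCommGroup F]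
    [NormedSpace ℝ F] (L : E2 →L[ℝ] F) :
    ‖L‖ ≤ ‖L (EuclideanSpace.single 0 1)‖ + ‖L (EuclideanSpace.single 1 1)‖ := by
  refine L.opNorm_le_bound (by positivity) fun v => ?_
  conv_lhs => rw [eq_single_zero_add_single_one v]
  rw [map_add, map_smul, map_smul, add_mul]
  refine (norm_add_le _ _).trans (add_le_add ?_ ?_) <;>
    rw [norm_smul, mul_comm] <;> gcongr <;> exact PiLp.norm_apply_le v _

theorem pd_zero (i : Fin 2) : pd i (0 : E2 → ℝ) = 0 := by
  ext z
  simp [pd]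

theorem Dmul_zero (α : ℕ × ℕ) : Dmul α (0 : E2 → ℝ) = 0 := by
  simp [Dmul, Function.iterate_fixed (pd_zero _)]

theorem pd_pd_eq_fderiv_fderiv {f : E2 → ℝ} (hf : ContDiff ℝ 2 f) (i j : Fin 2) (z : E2) :
    pd j (pd i f) z =
      fderiv ℝ (fderiv ℝ f) z (EuclideanSpace.single j 1) (EuclideanSpace.single i 1) := by
  have hd : DifferentiableAt ℝ (fderiv ℝ f) z :=
    (hf.fderiv_right (m := 1) le_rfl).differentiable one_ne_zero z
  change fderiv ℝ (fun u => fderiv ℝ f u (EuclideanSpace.single i 1)) z _ = _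
  rw [fderiv_clm_apply hd (differentiableAt_const _)]
  simp

theorem pd_one_pd_zero_eq {f : E2 → ℝ} (hf : ContDiff ℝ 2 f) (z : E2) :
    pd 1 (pd 0 f) z = pd 0 (pd 1 f) z := by
  rw [pd_pd_eq_fderiv_fderiv hf, pd_pd_eq_fderiv_fderiv hf]
  exact (hf.contDiffAt.isSymmSndFDerivAt (by simp [minSmoothness_of_isRCLikeNormedField])).eq _ _

theorem contDiff_pd {n : ℕ} {f : E2 → ℝ} (hf : ContDiff ℝ (n + 1) f) (i : Fin 2) :
    ContDiff ℝ n (pd i f) :=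
  (hf.fderiv_right (by norm_cast)).clm_apply contDiff_const

theorem contDiff_iterate_pd {m : ℕ} {f : E2 → ℝ} (i : Fin 2) :
    ∀ {n : ℕ}, ContDiff ℝ (m + n) f → ContDiff ℝ m ((pd i)^[n] f)
  | 0, hf => by simpa using hf
  | n + 1, hf => by
    rw [Function.iterate_succ_apply]
    exact contDiff_iterate_pd i (contDiff_pd (hf.of_le (by push_cast; rw [add_assoc])) i)

theorem pd_add_smul {f g : E2 → ℝ} (hf : Differentiable ℝ f) (hg : Differentiable ℝ g)
    (a b : ℝ) (i : Fin 2) : pd i (a • f + b • g) = a • pd i f + b • pd i g := by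
  funext z
  have : fderiv ℝ (a • f + b • g) z = a • fderiv ℝ f z + b • fderiv ℝ g z :=
    (((hf z).hasFDerivAt.const_smul a).add ((hg z).hasFDerivAt.const_smul b)).fderiv
  simp [pd, this]

theorem iterate_pd_add_smul {f g : E2 → ℝ} (a b : ℝ) (i : Fin 2) :
    ∀ {n : ℕ}, ContDiff ℝ n f → ContDiff ℝ n g →
      (pd i)^[n] (a • f + b • g) = a • (pd i)^[n] f + b • (pd i)^[n] g
  | 0, _, _ => rfl
  | n + 1, hf, hg => by
    simp only [Function.iterate_succ_apply]
    rw [pd_add_smul (hf.differentiable (by simp)) (hg.differentiable (by simp)),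
      iterate_pd_add_smul a b i (contDiff_pd hf i) (contDiff_pd hg i)]

theorem Dmul_add_smul {f g : E2 → ℝ} {α : ℕ × ℕ} (hf : ContDiff ℝ (α.1 + α.2) f)
    (hg : ContDiff ℝ (α.1 + α.2) g) (a b : ℝ) :
    Dmul α (a • f + b • g) = a • Dmul α f + b • Dmul α g := by
  unfold Dmul
  rw [iterate_pd_add_smul a b 1 (hf.of_le (by norm_cast; omega)) (hg.of_le (by norm_cast; omega)),
    iterate_pd_add_smul a b 0 (contDiff_iterate_pd 1 (by exact_mod_cast hf))
      (contDiff_iterate_pd 1 (by exact_mod_cast hg))]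

namespace C2NormLE

variable {f : E2 → ℝ} {M : ℝ}

theorem nonneg (h : C2NormLE f M) : 0 ≤ M :=
  (Real.sqrt_nonneg _).trans (h 0)

theorem abs_Dmul_le (h : C2NormLE f M) {α : ℕ × ℕ} (hα : α ∈ multiIdx2) (z : E2) :
    |Dmul α f z| ≤ M :=
  (Real.abs_le_sqrt (Finset.single_le_sum (f := fun α => Dmul α f z ^ 2)
    (fun _ _ => sq_nonneg _) hα)).trans (h z)

theorem abs_apply_le (h : C2NormLE f M) (z : E2) : |f z| ≤ M :=
  h.abs_Dmul_le (α := (0, 0)) (by decide) z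

theorem abs_pd_le (h : C2NormLE f M) (i : Fin 2) (z : E2) : |pd i f z| ≤ M := by
  fin_cases i
  exacts [h.abs_Dmul_le (α := (1, 0)) (by decide) z, h.abs_Dmul_le (α := (0, 1)) (by decide) z]

theorem abs_pd_pd_le (h : C2NormLE f M) (hf : ContDiff ℝ 2 f) (i j : Fin 2) (z : E2) :
    |pd j (pd i f) z| ≤ M := by
  fin_cases i <;> fin_cases j
  · exact h.abs_Dmul_le (α := (2, 0)) (by decide) z
  · exact pd_one_pd_zero_eq hf z ▸ h.abs_Dmul_le (α := (1, 1)) (by decide) z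
  · exact h.abs_Dmul_le (α := (1, 1)) (by decide) z
  · exact h.abs_Dmul_le (α := (0, 2)) (by decide) z

theorem norm_fderiv_le (h : C2NormLE f M) (z : E2) : ‖fderiv ℝ f z‖ ≤ 2 * M := by
  refine (ContinuousLinearMap.norm_le_norm_apply_single_add _).trans ?_
  simpa [pd, two_mul] using add_le_add (h.abs_pd_le 0 z) (h.abs_pd_le 1 z)

theorem norm_fderiv_fderiv_le (h : C2NormLE f M) (hf : ContDiff ℝ 2 f) (z : E2) :
    ‖fderiv ℝ (fderiv ℝ f) z‖ ≤ 4 * M := by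
  have hrow : ∀ j : Fin 2,
      ‖fderiv ℝ (fderiv ℝ f) z (EuclideanSpace.single j 1)‖ ≤ 2 * M := by
    intro j
    refine (ContinuousLinearMap.norm_le_norm_apply_single_add _).trans ?_
    simp only [Real.norm_eq_abs, ← pd_pd_eq_fderiv_fderiv hf]
    linarith [h.abs_pd_pd_le hf 0 j z, h.abs_pd_pd_le hf 1 j z]
  linarith [ContinuousLinearMap.norm_le_norm_apply_single_add (fderiv ℝ (fderiv ℝ f) z),
    hrow 0, hrow 1]

theorem norm_fderiv_sub_le (h : C2NormLE f M) (hf : ContDiff ℝ 2 f) (a b : E2) :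
    ‖fderiv ℝ f a - fderiv ℝ f b‖ ≤ 4 * M * ‖a - b‖ :=
  convex_univ.norm_image_sub_le_of_norm_fderiv_le
    (fun u _ => (hf.fderiv_right (m := 1) le_rfl).differentiable one_ne_zero u)
    (fun u _ => h.norm_fderiv_fderiv_le hf u) (mem_univ b) (mem_univ a)

theorem abs_sub_sub_fderiv_le (h : C2NormLE f M) (hf : ContDiff ℝ 2 f) (z w : E2) :
    |f w - f z - fderiv ℝ f z (w - z)| ≤ 4 * M * ‖w - z‖ ^ 2 := by
  have hmvt := (convex_closedBall z ‖w - z‖).norm_image_sub_le_of_norm_fderiv_le'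
    (fun u _ => hf.differentiable two_ne_zero u)
    (fun u hu => (h.norm_fderiv_sub_le hf u z).trans
      (mul_le_mul_of_nonneg_left (mem_closedBall_iff_norm.mp hu) ?_))
    (Metric.mem_closedBall_self (norm_nonneg _)) (mem_closedBall_iff_norm.mpr le_rfl)
  · rw [Real.norm_eq_abs] at hmvt
    linarith
  · linarith [h.nonneg]

theorem abs_le_of_eq_zero (h : C2NormLE f M) (hf : ContDiff ℝ 2 f) {x y : E2} (hy : f y = 0) :
    |f x| ≤ ‖fderiv ℝ f x‖ * ‖y - x‖ + 4 * M * ‖y - x‖ ^ 2 := by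
  have htaylor := abs_le.mp (h.abs_sub_sub_fderiv_le hf x y)
  have hlin := abs_le.mp ((fderiv ℝ f x).le_opNorm (y - x))
  rw [hy] at htaylor
  exact abs_le.mpr ⟨by linarith, by linarith⟩

end C2NormLE

def derivVec (F : E2 → ℝ) (x : E2) : EuclideanSpace ℝ multiIdx2 :=
  WithLp.toLp 2 fun α => Dmul α F x

theorem C2sum_eq_norm_derivVec (F : E2 → ℝ) (x : E2) : C2sum F x = ‖derivVec F x‖ := by
  simp [C2sum, derivVec, EuclideanSpace.norm_eq, ← Finset.sum_attach multiIdx2]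

theorem derivVec_add_smul {f g : E2 → ℝ} (hf : ContDiff ℝ 2 f) (hg : ContDiff ℝ 2 g)
    (a b : ℝ) (x : E2) : derivVec (a • f + b • g) x = a • derivVec f x + b • derivVec g x := by
  ext α
  have hα : ((α.1.1 + α.1.2 : ℕ) : WithTop ℕ∞) ≤ 2 := by
    have := α.2
    simp only [multiIdx2, Finset.mem_filter] at this
    exact_mod_cast this.2
  have := Dmul_add_smul (hf.of_le (by exact_mod_cast hα)) (hg.of_le (by exact_mod_cast hα)) a b
  simp [derivVec, this]

theorem C2NormLE.add_smul {f g : E2 → ℝ} {M N a b : ℝ} (hf : ContDiff ℝ 2 f)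
    (hg : ContDiff ℝ 2 g) (hfM : C2NormLE f M) (hgN : C2NormLE g N) (ha : 0 ≤ a) (hb : 0 ≤ b) :
    C2NormLE (a • f + b • g) (a * M + b * N) := by
  intro x
  rw [C2sum_eq_norm_derivVec, derivVec_add_smul hf hg]
  calc _ ≤ ‖a • derivVec f x‖ + ‖b • derivVec g x‖ := norm_add_le _ _
    _ = a * C2sum f x + b * C2sum g x := by
      rw [norm_smul, norm_smul, Real.norm_of_nonneg ha, Real.norm_of_nonneg hb,
        C2sum_eq_norm_derivVec, C2sum_eq_norm_derivVec]
    _ ≤ a * M + b * N := by gcongr; exacts [hfM x, hgN x]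

-- Linear coordinates `(P(c), ∇P)` on affine jets at `c`: a three-dimensional space, where
-- Helly's theorem applies.
def affineJet (c : E2) : ℝ × (E2 →L[ℝ] ℝ) →ₗ[ℝ] E2 → ℝ where
  toFun p w := p.1 + p.2 (w - c)
  map_add' p q := by
    ext w
    simp only [Prod.fst_add, Prod.snd_add, add_apply, Pi.add_apply]
    ring
  map_smul' r p := by
    ext w
    simp only [Prod.smul_fst, Prod.smul_snd, smul_apply, Pi.smul_apply, smul_eq_mul,
      RingHom.id_apply]
    ring

theorem jet_eq_affineJet (φ : E2 → ℝ) (x : E2) :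
    jet φ x = affineJet x (φ x, fderiv ℝ φ x) :=
  rfl

theorem affineJet_apply_self (c : E2) (p : ℝ × (E2 →L[ℝ] ℝ)) : affineJet c p c = p.1 := by
  simp [affineJet]

theorem hasFDerivAt_affineJet (c : E2) (p : ℝ × (E2 →L[ℝ] ℝ)) (w : E2) :
    HasFDerivAt (affineJet c p) p.2 w :=
  ((p.2.hasFDerivAt).comp w ((hasFDerivAt_id w).sub_const c)).const_add p.1

theorem fderiv_affineJet (c : E2) (p : ℝ × (E2 →L[ℝ] ℝ)) (w : E2) :
    fderiv ℝ (affineJet c p) w = p.2 :=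
  (hasFDerivAt_affineJet c p w).fderiv

theorem hasFDerivAt_jet (φ : E2 → ℝ) (x w : E2) : HasFDerivAt (jet φ x) (fderiv ℝ φ x) w :=
  hasFDerivAt_affineJet x (φ x, fderiv ℝ φ x) w

theorem fderiv_jet (φ : E2 → ℝ) (x w : E2) : fderiv ℝ (jet φ x) w = fderiv ℝ φ x :=
  (hasFDerivAt_jet φ x w).fderiv

theorem jet_add_smul {f g : E2 → ℝ} (hf : Differentiable ℝ f) (hg : Differentiable ℝ g)
    (a b : ℝ) (x : E2) : jet (a • f + b • g) x = a • jet f x + b • jet g x := by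
  have : fderiv ℝ (a • f + b • g) x = a • fderiv ℝ f x + b • fderiv ℝ g x :=
    (((hf x).hasFDerivAt.const_smul a).add ((hg x).hasFDerivAt.const_smul b)).fderiv
  simp only [jet_eq_affineJet, this, ← map_smul, ← map_add]
  rfl

theorem jetNormAt_affineJet (c : E2) (p : ℝ × (E2 →L[ℝ] ℝ)) :
    jetNormAt c (affineJet c p) = √(p.1 ^ 2 + ‖p.2‖ ^ 2) := by
  rw [jetNormAt, affineJet_apply_self, fderiv_affineJet]

theorem norm_snd_le_jetNormAt_affineJet (c : E2) (p : ℝ × (E2 →L[ℝ] ℝ)) :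
    ‖p.2‖ ≤ jetNormAt c (affineJet c p) := by
  rw [jetNormAt_affineJet]
  exact Real.le_sqrt_of_sq_le (by nlinarith [sq_nonneg p.1])

theorem jetNormAt_affineJet_le (c : E2) (p : ℝ × (E2 →L[ℝ] ℝ)) :
    jetNormAt c (affineJet c p) ≤ |p.1| + ‖p.2‖ := by
  rw [jetNormAt_affineJet, Real.sqrt_le_left (by positivity)]
  nlinarith [sq_abs p.1, abs_nonneg p.1, norm_nonneg p.2]

theorem convex_sigmaSet (x : E2) (S : Set E2) : Convex ℝ (sigmaSet x S) := by
  rintro _ ⟨f, hf, hfS, hfn, rfl⟩ _ ⟨g, hg, hgS, hgn, rfl⟩ a b ha hb hab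
  refine ⟨a • f + b • g, (hf.const_smul a).add (hg.const_smul b), fun z hz => ?_,
    by simpa [hab] using hfn.add_smul hf hg hgn ha hb, ?_⟩
  · simp [hfS z hz, hgS z hz]
  · exact (jet_add_smul (hf.differentiable two_ne_zero) (hg.differentiable two_ne_zero) a b x).symm

theorem zero_mem_sigmaSharp (E : Set E2) (x : E2) (k : ℕ) :
    (0 : E2 → ℝ) ∈ sigmaSharp E x k :=
  fun _ _ _ => ⟨0, contDiff_const, fun _ _ => rfl, fun z => by simp [C2sum, Dmul_zero],
    by ext; simp [jet]⟩

theorem exists_eq_affineJet_of_mem_sigmaSharp {E : Set E2} {x : E2} {k : ℕ} {P : E2 → ℝ}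
    (hP : P ∈ sigmaSharp E x k) :
    ∃ p, P = affineJet x p ∧ |p.1| ≤ 1 ∧ ‖p.2‖ ≤ 2 := by
  obtain ⟨φ, -, -, hφ, rfl⟩ := hP ∅ (empty_subset E) (by simp)
  exact ⟨_, jet_eq_affineJet φ x, hφ.abs_apply_le x, by simpa using hφ.norm_fderiv_le x⟩

theorem jetNormAt_sub_le_jetDiam {E : Set E2} {x : E2} {k : ℕ} {P P' : E2 → ℝ}
    (hP : P ∈ sigmaSharp E x k) (hP' : P' ∈ sigmaSharp E x k) :
    jetNormAt x (P - P') ≤ jetDiam x (sigmaSharp E x k) := by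
  refine le_csSup ⟨6, ?_⟩ ⟨P, hP, P', hP', rfl⟩
  rintro _ ⟨R, hR, R', hR', rfl⟩
  obtain ⟨p, rfl, hp₁, hp₂⟩ := exists_eq_affineJet_of_mem_sigmaSharp hR
  obtain ⟨p', rfl, hp'₁, hp'₂⟩ := exists_eq_affineJet_of_mem_sigmaSharp hR'
  rw [← map_sub]
  refine (jetNormAt_affineJet_le x _).trans ?_
  simp only [Prod.fst_sub, Prod.snd_sub]
  linarith [abs_sub p.1 p'.1, norm_sub_le p.2 p'.2]

theorem exists_affineJet_mem_sigmaSharp_of_mem_sigmaSharp {E : Set E2} (hE : E.Finite) {k : ℕ}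
    {x x' : E2} {P : E2 → ℝ} (hP : P ∈ sigmaSharp E x (4 * k)) :
    ∃ p : ℝ × (E2 →L[ℝ] ℝ), affineJet x' p ∈ sigmaSharp E x' k ∧
      ‖p.2 - fderiv ℝ P x‖ ≤ 4 * ‖x' - x‖ := by
  let F : Set E2 → Set (ℝ × (E2 →L[ℝ] ℝ)) := fun S =>
    affineJet x' ⁻¹' sigmaSet x' S ∩
      Prod.snd ⁻¹' Metric.closedBall (fderiv ℝ P x) (4 * ‖x' - x‖)
  have hs : {S | S ⊆ E ∧ S.ncard ≤ k}.Finite := hE.finite_subsets.subset fun S hS => hS.1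
  have hconvex : ∀ S ∈ hs.toFinset, Convex ℝ (F S) := fun S _ =>
    ((convex_sigmaSet x' S).linear_preimage _).inter
      ((convex_closedBall _ _).linear_preimage (LinearMap.snd ℝ ℝ (E2 →L[ℝ] ℝ)))
  have hfinrank : Module.finrank ℝ (ℝ × (E2 →L[ℝ] ℝ)) = 3 := by
    rw [Module.finrank_prod, ← LinearEquiv.finrank_eq LinearMap.toContinuousLinearMap]
    simp
  have hinter : ∀ I ⊆ hs.toFinset,
      I.card ≤ Module.finrank ℝ (ℝ × (E2 →L[ℝ] ℝ)) + 1 →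
      (⋂ S ∈ I, F S).Nonempty := by
    intro I hI hIcard
    have hIE : ∀ S ∈ I, S ⊆ E ∧ S.ncard ≤ k := fun S hS => by simpa using hI hS
    have hcard : (⋃ S ∈ I, S).ncard ≤ 4 * k :=
      calc _ ≤ ∑ S ∈ I, S.ncard := I.set_ncard_biUnion_le id
        _ ≤ ∑ _S ∈ I, k := Finset.sum_le_sum fun S hS => (hIE S hS).2
        _ ≤ 4 * k := by rw [Finset.sum_const, smul_eq_mul]; gcongr; omega
    obtain ⟨φ, hφ, hφS, hφn, rfl⟩ := hP _ (iUnion₂_subset fun S hS => (hIE S hS).1) hcard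
    refine ⟨(φ x', fderiv ℝ φ x'), mem_iInter₂.mpr fun S hS => ⟨?_, ?_⟩⟩
    · exact ⟨φ, hφ, fun z hz => hφS z (mem_biUnion hS hz), hφn, rfl⟩
    · simpa [fderiv_jet, dist_eq_norm] using hφn.norm_fderiv_sub_le hφ x' x
  obtain ⟨p, hp⟩ := Convex.helly_theorem' hconvex hinter
  have hpF : ∀ S, S ⊆ E → S.ncard ≤ k → p ∈ F S := fun S hSE hSk =>
    mem_iInter₂.mp hp S (by simpa using ⟨hSE, hSk⟩)
  exact ⟨p, fun S hSE hSk => (hpF S hSE hSk).1,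
    by simpa [dist_eq_norm] using (hpF ∅ (empty_subset E) (by simp)).2⟩

theorem norm_fderiv_lt_of_mem_sigmaSharp {E : Set E2} (hE : E.Finite) {k : ℕ} {x x' : E2}
    {P : E2 → ℝ} {r : ℝ} (hP : P ∈ sigmaSharp E x (4 * k))
    (hdiam : jetDiam x' (sigmaSharp E x' k) < r) : ‖fderiv ℝ P x‖ < r + 4 * ‖x' - x‖ := by
  obtain ⟨p, hpσ, hp⟩ := exists_affineJet_mem_sigmaSharp_of_mem_sigmaSharp hE (x' := x') hP
  have hp₂ : ‖p.2‖ < r :=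
    calc ‖p.2‖ ≤ jetNormAt x' (affineJet x' p - 0) := by
          simpa using norm_snd_le_jetNormAt_affineJet x' p
      _ ≤ jetDiam x' (sigmaSharp E x' k) :=
          jetNormAt_sub_le_jetDiam hpσ (zero_mem_sigmaSharp E x' k)
      _ < r := hdiam
  linarith [norm_sub_norm_le (fderiv ℝ P x) p.2, norm_sub_rev p.2 (fderiv ℝ P x)]

theorem abs_sub_le_of_mem_sqC {c x : E2} {δ : ℝ} (hx : x ∈ sqC c δ) (i : Fin 2) :
    |x i - c i| ≤ δ / 2 :=
  abs_le.mpr ⟨by linarith [(hx i).1], by linarith [(hx i).2]⟩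

theorem dyadicLen_pos (q : ℤ × ℤ × ℤ) : 0 < dyadicLen q := by
  unfold dyadicLen
  positivity

theorem dyadicLen_dyadicParent (q : ℤ × ℤ × ℤ) :
    dyadicLen (dyadicParent q) = 2 * dyadicLen q := by
  rw [dyadicLen, dyadicLen, dyadicParent, zpow_add_one₀ two_ne_zero, mul_comm]

theorem abs_two_mul_fdiv_two_add_one_sub_le (m : ℤ) :
    |(2 * (m.fdiv 2 : ℝ) + 1) - (m + 1 / 2)| ≤ 1 / 2 := by
  have h := Int.mul_fdiv_add_fmod m 2
  have h₀ := Int.fmod_nonneg_of_pos m two_pos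
  have h₁ := Int.fmod_lt_of_pos m two_pos
  have hlo : (2 * m.fdiv 2 : ℝ) ≤ m := by exact_mod_cast (by omega : 2 * m.fdiv 2 ≤ m)
  have hhi : (m : ℝ) ≤ 2 * m.fdiv 2 + 1 := by exact_mod_cast (by omega : m ≤ 2 * m.fdiv 2 + 1)
  rw [abs_le]
  constructor <;> linarith

theorem abs_dyadicCenter_dyadicParent_sub_le (q : ℤ × ℤ × ℤ) (i : Fin 2) :
    |dyadicCenter (dyadicParent q) i - dyadicCenter q i| ≤ dyadicLen q / 2 := by
  have key : ∀ m : ℤ, |dyadicLen (dyadicParent q) * ((m.fdiv 2 : ℝ) + 1 / 2) -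
      dyadicLen q * ((m : ℝ) + 1 / 2)| ≤ dyadicLen q / 2 := fun m => by
    rw [dyadicLen_dyadicParent, show ∀ a b : ℝ, 2 * dyadicLen q * (a + 1 / 2) - dyadicLen q * b
      = dyadicLen q * ((2 * a + 1) - b) from fun a b => by ring, abs_mul,
      abs_of_pos (dyadicLen_pos q)]
    linarith [mul_le_mul_of_nonneg_left (abs_two_mul_fdiv_two_add_one_sub_le m)
      (dyadicLen_pos q).le]
  fin_cases i
  exacts [key q.1, key q.2.1]

theorem norm_sub_le_of_mem_dyadicSq_of_mem_dilate_two {q : ℤ × ℤ × ℤ} {x y : E2}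
    (hx : x ∈ dyadicSq q) (hy : y ∈ dilate q 2) : ‖y - x‖ ≤ 3 * dyadicLen q := by
  refine (norm_sub_le_of_abs_apply_sub_le (r := 3 / 2 * dyadicLen q) fun i => ?_).trans_eq (by ring)
  have hx' := abs_sub_le_of_mem_sqC hx i
  have hy' := abs_sub_le_of_mem_sqC hy i
  rw [abs_sub_comm] at hx'
  linarith [abs_sub_le (y i) (dyadicCenter q i) (x i)]

theorem norm_sub_le_of_mem_dyadicSq_of_mem_dilate_parent {q : ℤ × ℤ × ℤ} {x y : E2}
    (hx : x ∈ dyadicSq q) (hy : y ∈ dilate (dyadicParent q) 2) :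
    ‖y - x‖ ≤ 6 * dyadicLen q := by
  refine (norm_sub_le_of_abs_apply_sub_le (r := 3 * dyadicLen q) fun i => ?_).trans_eq (by ring)
  have hy' := abs_sub_le_of_mem_sqC hy i
  rw [dyadicLen_dyadicParent] at hy'
  have hx' := abs_sub_le_of_mem_sqC hx i
  rw [abs_sub_comm] at hx'
  linarith [abs_sub_le (y i) (dyadicCenter (dyadicParent q) i) (dyadicCenter q i),
    abs_sub_le (y i) (dyadicCenter q i) (x i), abs_dyadicCenter_dyadicParent_sub_le q i]

theorem mem_smul_jetBall {P : E2 → ℝ} {x : E2} {C δ : ℝ} (hC : 0 < C)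
    (hP : DifferentiableAt ℝ P x) (hval : |P x| ≤ C * δ ^ 2)
    (hgrad : ‖fderiv ℝ P x‖ ≤ C * δ) :
    P ∈ C • jetBall x δ := by
  refine mem_smul_set.mpr ⟨C⁻¹ • P, ⟨?_, fun i => ?_⟩, smul_inv_smul₀ hC.ne' P⟩
  · rw [Pi.smul_apply, smul_eq_mul, abs_mul, abs_inv, abs_of_pos hC, inv_mul_le_iff₀ hC]
    exact hval
  · rw [fderiv_const_smul hP, smul_apply, smul_eq_mul, abs_mul, abs_inv,
      abs_of_pos hC, inv_mul_le_iff₀ hC]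
    exact ((fderiv ℝ P x).le_opNorm _).trans (by simpa using hgrad)

/-- (Lemma 5.7 of [JL20].) At a representative point `x_Q^♯` of
`Q ∈ Λ^♯`, one has `σ^♯(x_Q^♯, 4k₀) ⊆ C·ℬ(x_Q^♯, δ_Q)`. -/
theorem sigma_sharp_in_ball :
    ∀ (k₀ : ℕ) (C₀ : ℝ), 4 ≤ k₀ → 1000 ≤ C₀ →
      ∀ c₀ : ℝ, 0 < c₀ →
        ∃ C : ℝ, 0 < C ∧
          ∀ E : Set E2, E.Finite →
            ∀ q ∈ LambdaSharp E k₀ C₀,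
              ∀ x ∈ dyadicSq q, (∀ y ∈ E, c₀ * dyadicLen q ≤ dist x y) →
                sigmaSharp E x (4 * k₀) ⊆ C • jetBall x (dyadicLen q) := by
  intro k₀ C₀ hk₀ hC₀ _ _
  refine ⟨6 * C₀ + 108, by linarith, ?_⟩
  rintro E hE q ⟨⟨-, -, x', hx', hdiam⟩, y, hyE, hyQ⟩ x hx - P hP
  set δ := dyadicLen q
  have hxx' := norm_sub_le_of_mem_dyadicSq_of_mem_dilate_parent hx hx'
  have hxy := norm_sub_le_of_mem_dyadicSq_of_mem_dilate_two hx hyQ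
  have hgrad := norm_fderiv_lt_of_mem_sigmaSharp hE hP hdiam
  obtain ⟨ψ, hψ, hψy, hψn, rfl⟩ := hP {y} (singleton_subset_iff.mpr hyE) (by simp; omega)
  rw [fderiv_jet] at hgrad
  have hgrad' : ‖fderiv ℝ ψ x‖ ≤ (2 * C₀ + 24) * δ := by linarith
  refine mem_smul_jetBall (by linarith) (hasFDerivAt_jet ψ x x).differentiableAt ?_ ?_
  · rw [jet_eq_affineJet, affineJet_apply_self]
    calc _ ≤ ‖fderiv ℝ ψ x‖ * ‖y - x‖ + 4 * 1 * ‖y - x‖ ^ 2 :=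
          hψn.abs_le_of_eq_zero hψ (hψy y rfl)
      _ ≤ (2 * C₀ + 24) * δ * (3 * δ) + 4 * 1 * (3 * δ) ^ 2 := by
          gcongr
          exact (norm_nonneg _).trans hgrad'
      _ = (6 * C₀ + 108) * δ ^ 2 := by ring
  · rw [fderiv_jet]
    nlinarith [dyadicLen_pos q]
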